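/- arXiv:2601.19009 — 4 statements merged into one kernel-verified Lean document; each statement's English description precedes it below -/
import Mathlib

section
/- With generalized translation T_n defined via the Laplacian eigenbasis of a connected graph, for any g ∈ C^N and vertex n, ‖T_n g‖_2^2 ≤ N ν_n^2 ‖g‖_2^2, where ν_n = max_ℓ |χ_ℓ(n)|. -/
/-!
Let `U` be the matrix whose rows are the `χ ℓ`; orthonormality of the rows makes `U` unitary.
Then `ĝ = g Uᴴ` and `T_n g = √N (ĝ * w) U` with `w ℓ = conj (χ ℓ n)` (pointwise product), and
right multiplication by a unitary matrix preserves the `ℓ²` norm, so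
`‖T_n g‖² = N ∑_ℓ |ĝ(ℓ)|² |χ_ℓ(n)|² ≤ N ν_n² ‖ĝ‖² = N ν_n² ‖g‖²`.
-/

open Finset

noncomputable def gft {N : ℕ} (χ : Fin N → Fin N → ℂ) (f : Fin N → ℂ) (ℓ : Fin N) : ℂ :=
  ∑ i, f i * starRingEnd ℂ (χ ℓ i)

noncomputable def gtrans {N : ℕ} (χ : Fin N → Fin N → ℂ) (n : Fin N) (f : Fin N → ℂ)
    (i : Fin N) : ℂ :=
  ((Real.sqrt N : ℝ) : ℂ) * ∑ ℓ, gft χ f ℓ * starRingEnd ℂ (χ ℓ n) * χ ℓ i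

noncomputable def ip {N : ℕ} (f g : Fin N → ℂ) : ℂ :=
  ∑ i, f i * starRingEnd ℂ (g i)

noncomputable def nrm {N : ℕ} (f : Fin N → ℂ) : ℝ :=
  Real.sqrt (∑ i, ‖f i‖ ^ 2)

def IsONB {N : ℕ} (χ : Fin N → Fin N → ℂ) : Prop :=
  ∀ ℓ ℓ' : Fin N, (∑ i, χ ℓ i * starRingEnd ℂ (χ ℓ' i)) = if ℓ = ℓ' then 1 else 0

noncomputable def atom {N : ℕ} (χ : Fin N → Fin N → ℂ) (g : Fin N → ℂ) (n k i : Fin N) : ℂ :=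
  (N : ℂ) * χ k i * ∑ ℓ, gft χ g ℓ * starRingEnd ℂ (χ ℓ n) * χ ℓ i

open Matrix

lemma nrm_sq {N : ℕ} (f : Fin N → ℂ) : nrm f ^ 2 = ∑ i, ‖f i‖ ^ 2 :=
  Real.sq_sqrt (by positivity)

lemma ofReal_nrm_sq {N : ℕ} (f : Fin N → ℂ) : ((nrm f ^ 2 : ℝ) : ℂ) = f ⬝ᵥ star f := by
  simp [nrm_sq, dotProduct, Complex.mul_conj, ← Complex.sq_norm]

lemma nrm_vecMul_of_mem_unitaryGroup {N : ℕ} {U : Matrix (Fin N) (Fin N) ℂ}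
    (hU : U ∈ unitaryGroup (Fin N) ℂ) (v : Fin N → ℂ) : nrm (v ᵥ* U) = nrm v := by
  have h : ((nrm (v ᵥ* U) ^ 2 : ℝ) : ℂ) = ((nrm v ^ 2 : ℝ) : ℂ) := by
    rw [ofReal_nrm_sq, ofReal_nrm_sq, star_vecMul, ← dotProduct_mulVec, mulVec_mulVec,
      ← star_eq_conjTranspose, mem_unitaryGroup_iff.mp hU, one_mulVec]
  exact (pow_left_inj₀ (Real.sqrt_nonneg _) (Real.sqrt_nonneg _) two_ne_zero).mp
    (Complex.ofReal_injective h)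

lemma nrm_smul_sq {N : ℕ} (c : ℂ) (f : Fin N → ℂ) : nrm (c • f) ^ 2 = ‖c‖ ^ 2 * nrm f ^ 2 := by
  simp [nrm_sq, mul_sum, mul_pow]

lemma nrm_mul_sq_le {N : ℕ} {w : Fin N → ℂ} {ν : ℝ} (hw : ∀ i, ‖w i‖ ≤ ν) (f : Fin N → ℂ) :
    nrm (f * w) ^ 2 ≤ ν ^ 2 * nrm f ^ 2 := by
  rw [nrm_sq, nrm_sq, mul_sum]
  refine sum_le_sum fun i _ => ?_
  rw [Pi.mul_apply, norm_mul, mul_pow, mul_comm]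
  gcongr
  exact hw i

lemma isONB_iff_mem_unitaryGroup {N : ℕ} (χ : Fin N → Fin N → ℂ) :
    IsONB χ ↔ Matrix.of χ ∈ unitaryGroup (Fin N) ℂ := by
  rw [mem_unitaryGroup_iff, ← Matrix.ext_iff]
  simp [IsONB, mul_apply, one_apply]

lemma gft_eq_vecMul {N : ℕ} (χ : Fin N → Fin N → ℂ) (f : Fin N → ℂ) :
    gft χ f = f ᵥ* (Matrix.of χ)ᴴ := by
  ext ℓ
  simp [gft, vecMul, dotProduct]

lemma gtrans_eq_smul_vecMul {N : ℕ} (χ : Fin N → Fin N → ℂ) (n : Fin N) (f : Fin N → ℂ) :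
    gtrans χ n f =
      ((Real.sqrt N : ℝ) : ℂ) • ((gft χ f * fun ℓ => starRingEnd ℂ (χ ℓ n)) ᵥ* Matrix.of χ) := by
  ext i
  simp [gtrans, vecMul, dotProduct]

theorem stmt5 {N : ℕ} (χ : Fin N → Fin N → ℂ) (hχ : IsONB χ)
    (g : Fin N → ℂ) (n : Fin N) (ν : ℝ)
    (hν : IsGreatest {x : ℝ | ∃ ℓ : Fin N, x = ‖χ ℓ n‖} ν) :
    nrm (gtrans χ n g) ^ 2 ≤ (N : ℝ) * ν ^ 2 * nrm g ^ 2 := by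
  have hU := (isONB_iff_mem_unitaryGroup χ).mp hχ
  have hν_bound : ∀ ℓ, ‖starRingEnd ℂ (χ ℓ n)‖ ≤ ν := fun ℓ => by
    simpa using hν.2 ⟨ℓ, rfl⟩
  calc nrm (gtrans χ n g) ^ 2
      = N * nrm (gft χ g * fun ℓ => starRingEnd ℂ (χ ℓ n)) ^ 2 := by
        rw [gtrans_eq_smul_vecMul, nrm_smul_sq, nrm_vecMul_of_mem_unitaryGroup hU]
        simp
    _ ≤ N * (ν ^ 2 * nrm (gft χ g) ^ 2) := by gcongr; exact nrm_mul_sq_le hν_bound _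
    _ = N * ν ^ 2 * nrm g ^ 2 := by
        rw [gft_eq_vecMul, ← star_eq_conjTranspose, nrm_vecMul_of_mem_unitaryGroup (Unitary.star_mem hU), mul_assoc]
end

section
/- For any complex-valued graph signal f ∈ C^N and any vertex n, |f̂(0)| ≤ ‖T_n f‖_2, where f̂(0) = ⟨f, χ_0⟩ and T_n is the generalized translation. -/
open Finset

/-!
Writing `χ_ℓ` as vectors of `EuclideanSpace ℂ (Fin N)`, `T_n f` has coefficients
`√N f̂(ℓ) χ_ℓ(n)^*` in the orthonormal family `χ`, so Parseval gives
`‖T_n f‖² = N ∑_ℓ |f̂(ℓ)|² |χ_ℓ(n)|²`. Since `|χ_0(n)|² = 1/N`, the `ℓ = 0` term alone is `|f̂(0)|²`.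
-/

theorem Orthonormal.norm_sum_smul_sq {𝕜 E ι : Type*} [RCLike 𝕜] [NormedAddCommGroup E]
    [InnerProductSpace 𝕜 E] [Fintype ι] {v : ι → E} (hv : Orthonormal 𝕜 v) (a : ι → 𝕜) :
    ‖∑ i, a i • v i‖ ^ 2 = ∑ i, ‖a i‖ ^ 2 := by
  simpa using hv.orthogonalFamily.norm_sum a univ

section

variable {N : ℕ}

theorem nrm_nonneg (g : Fin N → ℂ) : 0 ≤ nrm g := Real.sqrt_nonneg _

theorem nrm_eq_norm_toLp (g : Fin N → ℂ) : nrm g = ‖WithLp.toLp 2 g‖ := by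
  simp [nrm, EuclideanSpace.norm_eq]

theorem toLp_gtrans (χ : Fin N → Fin N → ℂ) (n : Fin N) (f : Fin N → ℂ) :
    WithLp.toLp 2 (gtrans χ n f) = ((Real.sqrt N : ℝ) : ℂ) •
      ∑ ℓ, (gft χ f ℓ * starRingEnd ℂ (χ ℓ n)) • WithLp.toLp 2 (χ ℓ) := by
  ext i
  simp [gtrans, Finset.sum_apply]

namespace IsONB

variable {χ : Fin N → Fin N → ℂ}

theorem orthonormal (hχ : IsONB χ) : Orthonormal ℂ fun ℓ => WithLp.toLp 2 (χ ℓ) := by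
  classical
  rw [orthonormal_iff_ite]
  intro ℓ ℓ'
  simp [PiLp.inner_apply, hχ ℓ' ℓ, eq_comm]

theorem nrm_gtrans_sq (hχ : IsONB χ) (n : Fin N) (f : Fin N → ℂ) :
    nrm (gtrans χ n f) ^ 2 = N * ∑ ℓ, ‖gft χ f ℓ‖ ^ 2 * ‖χ ℓ n‖ ^ 2 := by
  rw [nrm_eq_norm_toLp, toLp_gtrans, norm_smul, mul_pow, hχ.orthonormal.norm_sum_smul_sq]
  simp [mul_pow]

end IsONB

end

theorem stmt7_general {N : ℕ} (hN : 0 < N) (χ : Fin N → Fin N → ℂ) (hχ : IsONB χ)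
    (hmod : ∀ i, ‖χ (⟨0, hN⟩ : Fin N) i‖ = 1 / Real.sqrt N)
    (f : Fin N → ℂ) (n : Fin N) :
    ‖gft χ f ⟨0, hN⟩‖ ≤ nrm (gtrans χ n f) := by
  have hN' : (0 : ℝ) < N := by exact_mod_cast hN
  refine (pow_le_pow_iff_left₀ (norm_nonneg _) (nrm_nonneg _) two_ne_zero).mp ?_
  rw [hχ.nrm_gtrans_sq]
  calc ‖gft χ f ⟨0, hN⟩‖ ^ 2 = N * (‖gft χ f ⟨0, hN⟩‖ ^ 2 * ‖χ ⟨0, hN⟩ n‖ ^ 2) := by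
        rw [hmod, div_pow, Real.sq_sqrt hN'.le]; field_simp
    _ ≤ N * ∑ ℓ, ‖gft χ f ℓ‖ ^ 2 * ‖χ ℓ n‖ ^ 2 := by
        gcongr
        exact single_le_sum (f := fun ℓ => ‖gft χ f ℓ‖ ^ 2 * ‖χ ℓ n‖ ^ 2)
          (fun ℓ _ => by positivity) (mem_univ _)

theorem stmt7 {N : ℕ} (hN : 0 < N) (χ : Fin N → Fin N → ℂ) (hχ : IsONB χ)
    (hconst : ∀ i j, χ ⟨0, hN⟩ i = χ ⟨0, hN⟩ j)
    (hmod : ∀ i, ‖χ (⟨0, hN⟩ : Fin N) i‖ = 1 / Real.sqrt N)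
    (f : Fin N → ℂ) (n : Fin N) :
    ‖gft χ f ⟨0, hN⟩‖ ≤ nrm (gtrans χ n f) :=
  stmt7_general hN χ hχ hmod f n
end

section
/- Two-window reconstruction formula: let g, γ ∈ C^N be windows with ⟨T_n γ, T_n g⟩ ≠ 0 for every vertex n. Then for every f ∈ C^N and every vertex i, f(i) = (1 / (N ⟨T_i γ, T_i g⟩)) Σ_{n=1}^N Σ_{k=0}^{N-1} ⟨f, g_{n,k}⟩ γ_{n,k}(i), where g_{n,k} = M_k T_n g and γ_{n,k} = M_k T_n γ. -/
open Finset

open scoped Matrix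

/-
Write `Φ_u(n, j) = ∑_ℓ û(ℓ) χ_ℓ(n)^* χ_ℓ(j)` (`transKernel`), so that `T_n u = √N Φ_u(n, ·)` and
`u_{n,k} = N χ_k · Φ_u(n, ·)`. Since the matrix `(χ_ℓ(i))` is unitary, its columns are
orthonormal too, so `∑_k ⟨F, χ_k⟩ χ_k(i) = F(i)`; applied to `F = f · Φ_g(n, ·)^*` this collapses
the sum over `k` to `N² f(i) Φ_γ(n, i) Φ_g(n, i)^*`. Parseval, once in the variable `j` and once
in `n`, shows that both `⟨T_i γ, T_i g⟩ / N` and `∑_n Φ_γ(n, i) Φ_g(n, i)^*` equal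
`∑_ℓ γ̂(ℓ) ĝ(ℓ)^* |χ_ℓ(i)|²`.
-/

section

variable {N : ℕ} {χ : Fin N → Fin N → ℂ}

noncomputable def transKernel (χ : Fin N → Fin N → ℂ) (u : Fin N → ℂ) (n j : Fin N) : ℂ :=
  ∑ ℓ, gft χ u ℓ * starRingEnd ℂ (χ ℓ n) * χ ℓ j

theorem gtrans_eq_transKernel (u : Fin N → ℂ) (n j : Fin N) :
    gtrans χ n u j = ((Real.sqrt N : ℝ) : ℂ) * transKernel χ u n j := rfl

theorem atom_eq_transKernel (u : Fin N → ℂ) (n k j : Fin N) :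
    atom χ u n k j = (N : ℂ) * χ k j * transKernel χ u n j := rfl

theorem isONB_iff_mul_conjTranspose :
    IsONB χ ↔ Matrix.of χ * (Matrix.of χ)ᴴ = 1 := by
  simp only [IsONB, ← Matrix.ext_iff, Matrix.mul_apply, Matrix.conjTranspose_apply,
    Matrix.of_apply, Matrix.one_apply, starRingEnd_apply]

namespace IsONB

theorem transpose (hχ : IsONB χ) : IsONB (fun a ℓ => χ ℓ a) := by
  rw [isONB_iff_mul_conjTranspose] at hχ ⊢
  have hcomm : (Matrix.of χ)ᴴ * Matrix.of χ = 1 := mul_eq_one_comm.mp hχ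
  calc Matrix.of (fun a ℓ => χ ℓ a) * (Matrix.of fun a ℓ => χ ℓ a)ᴴ
      = ((Matrix.of χ)ᴴ * Matrix.of χ)ᵀ := by
        rw [Matrix.transpose_mul]; rfl
    _ = 1 := by rw [hcomm, Matrix.transpose_one]

theorem conj (hχ : IsONB χ) : IsONB (fun ℓ x => starRingEnd ℂ (χ ℓ x)) := by
  intro ℓ ℓ'
  simp only [← map_mul, ← map_sum, hχ ℓ ℓ', apply_ite (starRingEnd ℂ), map_one, map_zero]

theorem sum_conj_mul (hχ : IsONB χ) (a b : Fin N) :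
    ∑ k, starRingEnd ℂ (χ k a) * χ k b = if a = b then 1 else 0 := by
  simpa only [mul_comm, eq_comm] using hχ.transpose b a

theorem ip_sum_mul (hχ : IsONB χ) (a b : Fin N → ℂ) :
    ip (fun x => ∑ ℓ, a ℓ * χ ℓ x) (fun x => ∑ m, b m * χ m x) =
      ∑ ℓ, a ℓ * starRingEnd ℂ (b ℓ) := by
  have hexpand : ∀ x, (∑ ℓ, a ℓ * χ ℓ x) * starRingEnd ℂ (∑ m, b m * χ m x) =
      ∑ ℓ, ∑ m, a ℓ * starRingEnd ℂ (b m) * (χ ℓ x * starRingEnd ℂ (χ m x)) := by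
    intro x
    simp only [map_sum, map_mul, sum_mul_sum]
    exact sum_congr rfl fun _ _ => sum_congr rfl fun _ _ => by ring
  simp only [ip, hexpand]
  rw [sum_comm]
  refine sum_congr rfl fun ℓ _ => ?_
  simp only [sum_comm (γ := Fin N), ← mul_sum, hχ ℓ, mul_ite, mul_one, mul_zero, sum_ite_eq,
    mem_univ, if_true]

theorem sum_gft_mul (hχ : IsONB χ) (f : Fin N → ℂ) (i : Fin N) :
    ∑ k, gft χ f k * χ k i = f i := by
  simp only [gft, sum_mul]
  rw [sum_comm]
  simp only [mul_assoc, ← mul_sum, hχ.sum_conj_mul, mul_ite, mul_one, mul_zero, sum_ite_eq',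
    mem_univ, if_true]

end IsONB

variable (hχ : IsONB χ)
include hχ

theorem ip_transKernel_transKernel (γ g : Fin N → ℂ) (n : Fin N) :
    ip (transKernel χ γ n) (transKernel χ g n) =
      ∑ ℓ, gft χ γ ℓ * starRingEnd ℂ (gft χ g ℓ) * (χ ℓ n * starRingEnd ℂ (χ ℓ n)) :=
  (hχ.ip_sum_mul (fun ℓ => gft χ γ ℓ * starRingEnd ℂ (χ ℓ n))
    (fun ℓ => gft χ g ℓ * starRingEnd ℂ (χ ℓ n))).trans
    (sum_congr rfl fun _ _ => by simp only [map_mul, Complex.conj_conj]; ring)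

theorem ip_gtrans_gtrans (γ g : Fin N → ℂ) (n : Fin N) :
    ip (gtrans χ n γ) (gtrans χ n g) =
      N * ∑ ℓ, gft χ γ ℓ * starRingEnd ℂ (gft χ g ℓ) * (χ ℓ n * starRingEnd ℂ (χ ℓ n)) := by
  have hsqrt : ((Real.sqrt N : ℝ) : ℂ) * starRingEnd ℂ ((Real.sqrt N : ℝ) : ℂ) = N := by
    rw [Complex.conj_ofReal, ← Complex.ofReal_mul, Real.mul_self_sqrt (Nat.cast_nonneg N)]
    simp
  rw [← ip_transKernel_transKernel hχ, ← hsqrt]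
  simp only [ip, gtrans_eq_transKernel, map_mul, mul_sum]
  exact sum_congr rfl fun _ _ => by ring

/-- Parseval in the translation variable: `Φ_u(·, i)` is an expansion in the basis `χ^*`. -/
theorem sum_transKernel_mul_conj (γ g : Fin N → ℂ) (i : Fin N) :
    ∑ n, transKernel χ γ n i * starRingEnd ℂ (transKernel χ g n i) =
      ∑ ℓ, gft χ γ ℓ * starRingEnd ℂ (gft χ g ℓ) * (χ ℓ i * starRingEnd ℂ (χ ℓ i)) := by
  have hexpand : ∀ (u : Fin N → ℂ) n,
      transKernel χ u n i = ∑ ℓ, (gft χ u ℓ * χ ℓ i) * starRingEnd ℂ (χ ℓ n) :=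
    fun u n => sum_congr rfl fun _ _ => mul_right_comm _ _ _
  simp only [hexpand]
  exact (hχ.conj.ip_sum_mul _ _).trans (sum_congr rfl fun _ _ => by rw [map_mul]; ring)

theorem sum_ip_atom_mul_atom (f g γ : Fin N → ℂ) (n i : Fin N) :
    ∑ k, ip f (atom χ g n k) * atom χ γ n k i =
      N ^ 2 * f i * (transKernel χ γ n i * starRingEnd ℂ (transKernel χ g n i)) := by
  have hip : ∀ k, ip f (atom χ g n k) =
      N * gft χ (fun j => f j * starRingEnd ℂ (transKernel χ g n j)) k := by
    intro k
    simp only [ip, gft, atom_eq_transKernel, map_mul, map_natCast, mul_sum]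
    exact sum_congr rfl fun _ _ => by ring
  have hreproduce := hχ.sum_gft_mul (fun j => f j * starRingEnd ℂ (transKernel χ g n j)) i
  simp only [hip, atom_eq_transKernel]
  calc ∑ k, N * gft χ (fun j => f j * starRingEnd ℂ (transKernel χ g n j)) k *
          (N * χ k i * transKernel χ γ n i)
      = N ^ 2 * transKernel χ γ n i *
          ∑ k, gft χ (fun j => f j * starRingEnd ℂ (transKernel χ g n j)) k * χ k i := by
        rw [mul_sum]; exact sum_congr rfl fun _ _ => by ring
    _ = _ := by rw [hreproduce]; ring

end

theorem stmt8 {N : ℕ} (χ : Fin N → Fin N → ℂ) (hχ : IsONB χ)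
    (g γ : Fin N → ℂ)
    (hnd : ∀ n : Fin N, ip (gtrans χ n γ) (gtrans χ n g) ≠ 0)
    (f : Fin N → ℂ) (i : Fin N) :
    f i = (1 / ((N : ℂ) * ip (gtrans χ i γ) (gtrans χ i g))) *
      ∑ n, ∑ k, ip f (atom χ g n k) * atom χ γ n k i := by
  set C := ∑ ℓ, gft χ γ ℓ * starRingEnd ℂ (gft χ g ℓ) * (χ ℓ i * starRingEnd ℂ (χ ℓ i))
  have hip : ip (gtrans χ i γ) (gtrans χ i g) = N * C := ip_gtrans_gtrans hχ γ g i
  have hsum : ∑ n, ∑ k, ip f (atom χ g n k) * atom χ γ n k i = N ^ 2 * f i * C := by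
    simp only [sum_ip_atom_mul_atom hχ, ← mul_sum, sum_transKernel_mul_conj hχ, C]
  have hNC : (N : ℂ) * C ≠ 0 := hip ▸ hnd i
  rw [hip, hsum]
  field_simp [left_ne_zero_of_mul hNC, right_ne_zero_of_mul hNC]
end

section
/- Polarization-based sufficient condition: let g, γ ∈ C^N satisfy |ĝ(0) + γ̂(0)| > √N μ ‖ĝ - γ̂‖_2, where μ = max_{ℓ,n} |χ_ℓ(n)|. Then ⟨T_n g, T_n γ⟩ ≠ 0 for every vertex n. -/
open Finset

/-!
By Parseval, `⟨T_n g, T_n γ⟩ = N ∑_ℓ ĝ(ℓ) conj(γ̂(ℓ)) |χ_ℓ(n)|²`, and by polarization four times its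
real part is `N ∑_ℓ |χ_ℓ(n)|² (|ĝ(ℓ) + γ̂(ℓ)|² - |ĝ(ℓ) - γ̂(ℓ)|²)`. The constant eigenvector has
`|χ_0(n)|² = 1/N`, so the first sum is at least `|ĝ(0) + γ̂(0)|² / N`, while the second is at most
`μ² ‖ĝ - γ̂‖²`. The hypothesis makes the difference positive, so the inner product is nonzero.
-/

open ComplexConjugate

lemma IsONB.ip_sum_mul_s11 {N : ℕ} {χ : Fin N → Fin N → ℂ} (hχ : IsONB χ) (P Q : Fin N → ℂ) :
    ip (fun i => ∑ ℓ, P ℓ * χ ℓ i) (fun i => ∑ ℓ, Q ℓ * χ ℓ i) = ip P Q := by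
  calc ip (fun i => ∑ ℓ, P ℓ * χ ℓ i) (fun i => ∑ ℓ, Q ℓ * χ ℓ i)
      = ∑ i, ∑ ℓ, ∑ ℓ', P ℓ * conj (Q ℓ') * (χ ℓ i * conj (χ ℓ' i)) := by
        simp only [ip, map_sum, map_mul, sum_mul_sum]
        exact sum_congr rfl fun i _ => sum_congr rfl fun ℓ _ => sum_congr rfl fun ℓ' _ => by ring
    _ = ∑ ℓ, ∑ ℓ', P ℓ * conj (Q ℓ') * ∑ i, χ ℓ i * conj (χ ℓ' i) := by
        simp only [mul_sum]
        rw [sum_comm]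
        exact sum_congr rfl fun ℓ _ => sum_comm
    _ = ip P Q := by
        simp only [hχ _ _, mul_ite, mul_one, mul_zero, sum_ite_eq, mem_univ, if_true, ip]

lemma IsONB.ip_gtrans {N : ℕ} {χ : Fin N → Fin N → ℂ} (hχ : IsONB χ) (n : Fin N)
    (f h : Fin N → ℂ) :
    ip (gtrans χ n f) (gtrans χ n h)
      = N * ∑ ℓ, gft χ f ℓ * conj (gft χ h ℓ) * (‖χ ℓ n‖ ^ 2 : ℝ) := by
  have hsqrt : ((Real.sqrt N : ℝ) : ℂ) * ((Real.sqrt N : ℝ) : ℂ) = N := by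
    rw [← Complex.ofReal_mul, Real.mul_self_sqrt (Nat.cast_nonneg N), Complex.ofReal_natCast]
  calc ip (gtrans χ n f) (gtrans χ n h)
      = N * ip (fun i => ∑ ℓ, gft χ f ℓ * conj (χ ℓ n) * χ ℓ i)
          (fun i => ∑ ℓ, gft χ h ℓ * conj (χ ℓ n) * χ ℓ i) := by
        simp only [ip, gtrans, map_mul, Complex.conj_ofReal]
        rw [← hsqrt, mul_sum]
        exact sum_congr rfl fun i _ => by ring
    _ = N * ip (fun ℓ => gft χ f ℓ * conj (χ ℓ n)) (fun ℓ => gft χ h ℓ * conj (χ ℓ n)) := by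
        rw [hχ.ip_sum_mul_s11]
    _ = N * ∑ ℓ, gft χ f ℓ * conj (gft χ h ℓ) * (‖χ ℓ n‖ ^ 2 : ℝ) := by
        simp only [ip, map_mul, Complex.conj_conj, Complex.ofReal_pow, ← Complex.mul_conj']
        exact congrArg _ (sum_congr rfl fun ℓ _ => by ring)

lemma Complex.four_mul_re_mul_conj (z w : ℂ) :
    4 * (z * conj w).re = ‖z + w‖ ^ 2 - ‖z - w‖ ^ 2 := by
  rw [Complex.sq_norm, Complex.sq_norm, Complex.normSq_add, Complex.normSq_sub]
  ring

lemma Complex.le_four_mul_re_sum_mul_conj_mul_ofReal {ι : Type*} [Fintype ι] {a b : ι → ℂ}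
    {w : ι → ℝ} (hw : ∀ ℓ, 0 ≤ w ℓ) {M : ℝ} (hM : ∀ ℓ, w ℓ ≤ M) (k : ι) :
    w k * ‖a k + b k‖ ^ 2 - M * ∑ ℓ, ‖a ℓ - b ℓ‖ ^ 2
      ≤ 4 * (∑ ℓ, a ℓ * conj (b ℓ) * (w ℓ : ℂ)).re := by
  have hpolar : 4 * (∑ ℓ, a ℓ * conj (b ℓ) * (w ℓ : ℂ)).re
      = ∑ ℓ, w ℓ * ‖a ℓ + b ℓ‖ ^ 2 - ∑ ℓ, w ℓ * ‖a ℓ - b ℓ‖ ^ 2 := by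
    simp only [Complex.re_sum, Complex.re_mul_ofReal, mul_sum, ← sum_sub_distrib]
    exact sum_congr rfl fun ℓ _ => by rw [← mul_sub, ← Complex.four_mul_re_mul_conj]; ring
  have hplus : w k * ‖a k + b k‖ ^ 2 ≤ ∑ ℓ, w ℓ * ‖a ℓ + b ℓ‖ ^ 2 :=
    single_le_sum (f := fun ℓ => w ℓ * ‖a ℓ + b ℓ‖ ^ 2)
      (fun ℓ _ => mul_nonneg (hw ℓ) (sq_nonneg _)) (mem_univ k)
  have hminus : ∑ ℓ, w ℓ * ‖a ℓ - b ℓ‖ ^ 2 ≤ M * ∑ ℓ, ‖a ℓ - b ℓ‖ ^ 2 := by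
    rw [mul_sum]
    exact sum_le_sum fun ℓ _ => mul_le_mul_of_nonneg_right (hM ℓ) (by positivity)
  linarith

theorem stmt11_general {N : ℕ} (hN : 0 < N) (χ : Fin N → Fin N → ℂ) (hχ : IsONB χ)
    (hmod : ∀ i, ‖χ (⟨0, hN⟩ : Fin N) i‖ = 1 / Real.sqrt N)
    (μ : ℝ)
    (hμ : IsGreatest {x : ℝ | ∃ ℓ n : Fin N, x = ‖χ ℓ n‖} μ)
    (g γ : Fin N → ℂ)
    (hcond : ‖gft χ g ⟨0, hN⟩ + gft χ γ ⟨0, hN⟩‖ >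
      Real.sqrt N * μ * Real.sqrt (∑ ℓ, ‖gft χ g ℓ - gft χ γ ℓ‖ ^ 2)) :
    ∀ n : Fin N, ip (gtrans χ n g) (gtrans χ n γ) ≠ 0 := by
  intro n hzero
  have hNpos : (0 : ℝ) < N := Nat.cast_pos.mpr hN
  have hμ_nonneg : 0 ≤ μ := (norm_nonneg _).trans (hμ.2 ⟨n, n, rfl⟩)
  have hcond_sq : N * μ ^ 2 * ∑ ℓ, ‖gft χ g ℓ - gft χ γ ℓ‖ ^ 2
      < ‖gft χ g ⟨0, hN⟩ + gft χ γ ⟨0, hN⟩‖ ^ 2 := by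
    have := pow_lt_pow_left₀ hcond
      (mul_nonneg (mul_nonneg (Real.sqrt_nonneg _) hμ_nonneg) (Real.sqrt_nonneg _)) two_ne_zero
    rwa [mul_pow, mul_pow, Real.sq_sqrt hNpos.le,
      Real.sq_sqrt (sum_nonneg fun ℓ _ => sq_nonneg _)] at this
  have hweight_zero : ‖χ ⟨0, hN⟩ n‖ ^ 2 = 1 / N := by
    rw [hmod, div_pow, one_pow, Real.sq_sqrt hNpos.le]
  have hre_zero : (∑ ℓ, gft χ g ℓ * conj (gft χ γ ℓ) * (‖χ ℓ n‖ ^ 2 : ℝ)).re = 0 := by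
    have := congrArg Complex.re (hχ.ip_gtrans n g γ)
    rw [hzero, ← Complex.ofReal_natCast, Complex.re_ofReal_mul, Complex.zero_re] at this
    exact (mul_eq_zero.mp this.symm).resolve_left hNpos.ne'
  have hbound := Complex.le_four_mul_re_sum_mul_conj_mul_ofReal (a := gft χ g) (b := gft χ γ)
    (fun ℓ => sq_nonneg ‖χ ℓ n‖) (M := μ ^ 2)
    (fun ℓ => pow_le_pow_left₀ (norm_nonneg _) (hμ.2 ⟨ℓ, n, rfl⟩) 2) ⟨0, hN⟩
  rw [hre_zero, hweight_zero, mul_zero, sub_nonpos, one_div_mul_eq_div, div_le_iff₀ hNpos] at hbound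
  linarith

theorem stmt11 {N : ℕ} (hN : 0 < N) (χ : Fin N → Fin N → ℂ) (hχ : IsONB χ)
    (hconst : ∀ i j, χ ⟨0, hN⟩ i = χ ⟨0, hN⟩ j)
    (hmod : ∀ i, ‖χ (⟨0, hN⟩ : Fin N) i‖ = 1 / Real.sqrt N)
    (μ : ℝ)
    (hμ : IsGreatest {x : ℝ | ∃ ℓ n : Fin N, x = ‖χ ℓ n‖} μ)
    (g γ : Fin N → ℂ)
    (hcond : ‖gft χ g ⟨0, hN⟩ + gft χ γ ⟨0, hN⟩‖ >
      Real.sqrt N * μ * Real.sqrt (∑ ℓ, ‖gft χ g ℓ - gft χ γ ℓ‖ ^ 2)) :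
    ∀ n : Fin N, ip (gtrans χ n g) (gtrans χ n γ) ≠ 0 :=
  stmt11_general hN χ hχ hmod μ hμ g γ hcond
end
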